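/- Let n ≥ 1, let ε > 0 be a real number, let 𝒱 be a type with decidable equality, let x : Fin n → 𝒱, and let G be a simple graph on Fin n with the property that for every nonempty set S ⊆ Fin n with |S| ≤ n/2, at least ε·|S| vertices of S have a neighbor outside S. Define A := {u : ∃ w, G.Adj u w ∧ x_w ≠ x_u} and k := |A|. Then for every node v such that |{w : x_w = x_v}| ≤ n/2, the set Q_v := {v + i mod n : 0 ≤ i ≤ ⌈2k/ε⌉} satisfies |{w ∈ Q_v : x_w ≠ x_v}| ≥ |Q_v| / 2. -/

import Mathlib

/-!
The nodes holding `x v` form a set `S` of size at most `n/2`, and every node of `S` with a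
neighbor outside `S` sees a different value, i.e. raises an alert. Vertex expansion therefore
gives `ε |S| ≤ k`, so `|S| ≤ k/ε`. The window has `min (⌈2k/ε⌉ + 1) n` elements, which is at
least `2|S|` in both cases, and only nodes of `S` in the window agree with `v`.
-/

open Finset

namespace SimpleGraph

variable {V α : Type*} [Fintype V] [DecidableEq α] (G : SimpleGraph V)

lemma boundary_fiber_subset_disagreeing (x : V → α) (c : α) :
    {u | u ∈ ({w | x w = c} : Finset V) ∧ ∃ w, w ∉ ({w | x w = c} : Finset V) ∧ G.Adj u w} ⊆
      {u | ∃ w, G.Adj u w ∧ x w ≠ x u} := by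
  rintro u ⟨hu, w, hw, hadj⟩
  simp only [mem_filter, mem_univ, true_and] at hu hw
  exact ⟨w, hadj, hu ▸ hw⟩

lemma mul_card_fiber_le_ncard_disagreeing {ε : ℝ}
    (hexp : ∀ S : Finset V, S.Nonempty → (#S : ℝ) ≤ Fintype.card V / 2 →
      ε * #S ≤ {u | u ∈ S ∧ ∃ w, w ∉ S ∧ G.Adj u w}.ncard)
    (x : V → α) (v : V) (hv : (#{w | x w = x v} : ℝ) ≤ Fintype.card V / 2) :
    ε * #{w | x w = x v} ≤ {u | ∃ w, G.Adj u w ∧ x w ≠ x u}.ncard :=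
  (hexp _ ⟨v, by simp⟩ hv).trans <| by
    exact_mod_cast Set.ncard_le_ncard (G.boundary_fiber_subset_disagreeing x (x v))

end SimpleGraph

namespace Fin

lemma card_image_range_ofNat (n m : ℕ) [NeZero n] :
    #((range m).image fun i => Fin.ofNat n i) = min m n := by
  rcases le_total m n with hmn | hnm
  · rw [card_image_of_injOn, card_range, min_eq_left hmn]
    intro i hi j hj hij
    simp only [coe_range, Set.mem_Iio] at hi hj
    simpa [Nat.mod_eq_of_lt (hi.trans_le hmn), Nat.mod_eq_of_lt (hj.trans_le hmn)] using
      congrArg Fin.val hij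
  · have hwrap : (range m).image (fun i => Fin.ofNat n i) = univ :=
      eq_univ_of_forall fun w => mem_image.2 ⟨w, mem_range.2 (w.isLt.trans_le hnm), by simp⟩
    rw [hwrap, card_univ, Fintype.card_fin, min_eq_right hnm]

lemma card_image_range_add_ofNat {n : ℕ} [NeZero n] (v : Fin n) (m : ℕ) :
    #((range m).image fun i => v + Fin.ofNat n i) = min m n := by
  have h := card_image_of_injective ((range m).image fun i => Fin.ofNat n i)
    (add_right_injective v)
  rw [image_image] at h
  exact h.trans (card_image_range_ofNat n m)

end Fin

theorem weak_king_query_window_majority_disagrees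
    {n : ℕ} [NeZero n] (ε : ℝ) (hε : 0 < ε)
    {𝒱 : Type*} [DecidableEq 𝒱]
    (x : Fin n → 𝒱) (G : SimpleGraph (Fin n))
    (hexp : ∀ S : Finset (Fin n), S.Nonempty → (S.card : ℝ) ≤ (n : ℝ) / 2 →
      ε * (S.card : ℝ) ≤
        (({u : Fin n | u ∈ S ∧ ∃ w : Fin n, w ∉ S ∧ G.Adj u w}.ncard : ℝ)))
    (A : Set (Fin n)) (hA : A = {u : Fin n | ∃ w : Fin n, G.Adj u w ∧ x w ≠ x u})
    (k : ℕ) (hk : k = A.ncard)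
    (v : Fin n) (hv : (({w : Fin n | x w = x v}.ncard : ℝ)) ≤ (n : ℝ) / 2)
    (Q : Finset (Fin n))
    (hQ : Q = (Finset.range (⌈(2 * (k : ℝ)) / ε⌉₊ + 1)).image
      (fun i : ℕ => v + (Fin.ofNat n i : Fin n))) :
    (Q.card : ℝ) / 2 ≤ ((Q.filter fun w => x w ≠ x v).card : ℝ) := by
  set S : Finset (Fin n) := {w | x w = x v}
  have hSn : (#S : ℝ) ≤ n / 2 := by simpa [S, Set.ncard_eq_toFinset_card'] using hv
  have hSk : ε * #S ≤ k := by
    subst hk hA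
    exact G.mul_card_fiber_le_ncard_disagreeing (by simpa using hexp) x v (by simpa using hSn)
  have hSm : (#S : ℝ) ≤ (⌈2 * (k : ℝ) / ε⌉₊ + 1 : ℕ) / 2 := by
    have hceil := Nat.le_ceil (2 * (k : ℝ) / ε)
    rw [div_le_iff₀ hε] at hceil
    push_cast
    nlinarith
  have hQS : #(Q.filter fun w => ¬x w ≠ x v) ≤ #S :=
    card_le_card fun w hw => by simpa [S] using (mem_filter.1 hw).2
  have hQ2 : (#S : ℝ) ≤ #Q / 2 := by
    rw [hQ, Fin.card_image_range_add_ofNat, Nat.cast_min, ← min_div_div_right zero_le_two]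
    exact le_min hSm hSn
  have hsplit : (#Q : ℝ) = #(Q.filter fun w => x w ≠ x v) + #(Q.filter fun w => ¬x w ≠ x v) := by
    exact_mod_cast (card_filter_add_card_filter_not (fun w => x w ≠ x v)).symm
  linarith [(Nat.cast_le (α := ℝ)).2 hQS]
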